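/- For any permutation α of [n] with n ≥ 1, the maximum of |C(α ∘ γ) - C(γ)| over all permutations γ of [n] equals n - C(α), where C denotes the number of cycles of a permutation. -/

import Mathlib

/-!
Write `C(σ)` for the number of orbits of `σ`. It is the dimension of the space of functions
`[n] → ℚ` that are constant on the orbits of `σ`. A function invariant under both `α` and `γ` is
invariant under `αγ`, so Grassmann's formula in the `n`-dimensional space of all functions gives
`C(α) + C(γ) ≤ n + C(αγ)`. Applied also to `α⁻¹` and `αγ` (and `C(α⁻¹) = C(α)`), this bounds
`|C(αγ) - C(γ)|` by `n - C(α)`, and `γ = 1` attains the bound.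
-/

/-- Number of cycles (orbits, including fixed points) of a permutation. -/
def cycleCount {α : Type*} [Fintype α] [DecidableEq α] (σ : Equiv.Perm α) : ℕ :=
  Fintype.card α - σ.cycleType.sum + σ.cycleType.card

open Module

namespace Equiv.Perm

section CycleCount

variable {α : Type*} [Fintype α] [DecidableEq α]

lemma cycleCount_one : cycleCount (1 : Perm α) = Fintype.card α := by
  simp [cycleCount]

lemma cycleCount_inv (σ : Perm α) : cycleCount σ⁻¹ = cycleCount σ := by
  simp [cycleCount]

lemma IsCycle.cycleCount_eq {c : Perm α} (hc : c.IsCycle) :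
    cycleCount c = Fintype.card α - c.support.card + 1 := by
  simp [cycleCount, hc.cycleType]

lemma Disjoint.cycleCount_mul_add_card {σ τ : Perm α} (hd : σ.Disjoint τ) :
    cycleCount (σ * τ) + Fintype.card α = cycleCount σ + cycleCount τ := by
  have hsupp : (σ * τ).support.card ≤ Fintype.card α := Finset.card_le_univ _
  simp only [cycleCount, hd.cycleType_mul, Multiset.sum_add, Multiset.card_add, sum_cycleType,
    hd.card_support_mul] at hsupp ⊢
  omega

end CycleCount

section InvariantFunctions

variable {α : Type*} (K : Type*) [Field K]

def invariantFunctions (σ : Perm α) : Submodule K (α → K) where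
  carrier := {v | ∀ i, v (σ i) = v i}
  add_mem' ha hb i := by simp [ha i, hb i]
  zero_mem' _ := rfl
  smul_mem' c v hv i := by simp [hv i]

variable {K}

lemma invariantFunctions_one : invariantFunctions K (1 : Perm α) = ⊤ :=
  eq_top_iff.2 fun _ _ _ => rfl

lemma inf_le_invariantFunctions_mul (σ τ : Perm α) :
    invariantFunctions K σ ⊓ invariantFunctions K τ ≤ invariantFunctions K (σ * τ) :=
  fun _ ⟨hσ, hτ⟩ i => (hσ (τ i)).trans (hτ i)

lemma apply_pow_eq_of_mem_invariantFunctions {σ : Perm α} {v : α → K}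
    (hv : v ∈ invariantFunctions K σ) (k : ℕ) (i : α) : v ((σ ^ k) i) = v i := by
  induction k with
  | zero => rfl
  | succ k ih => rw [pow_succ', mul_apply, hv, ih]

lemma mem_invariantFunctions_right_of_mul {σ τ : Perm α} (hd : σ.Disjoint τ) {v : α → K}
    (hv : v ∈ invariantFunctions K (σ * τ)) : v ∈ invariantFunctions K τ := by
  intro i
  by_cases hi : τ i = i
  · rw [hi]
  · have hσ : σ (τ i) = τ i := (hd (τ i)).resolve_right fun h => hi (τ.injective h)
    simpa [hσ] using hv i

lemma Disjoint.invariantFunctions_mul {σ τ : Perm α} (hd : σ.Disjoint τ) :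
    invariantFunctions K (σ * τ) = invariantFunctions K σ ⊓ invariantFunctions K τ := by
  refine le_antisymm (fun v hv => ⟨?_, mem_invariantFunctions_right_of_mul hd hv⟩)
    (inf_le_invariantFunctions_mul σ τ)
  rw [hd.commute.eq] at hv
  exact mem_invariantFunctions_right_of_mul hd.symm hv

variable [Fintype α] [DecidableEq α]

lemma mem_invariantFunctions_of_forall_mem_support {σ : Perm α}
    {v : α → K} (hv : ∀ i ∈ σ.support, v i = 0) : v ∈ invariantFunctions K σ := by
  intro i
  by_cases hi : i ∈ σ.support
  · rw [hv i hi, hv (σ i) (apply_mem_support.2 hi)]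
  · rw [notMem_support.1 hi]

lemma Disjoint.invariantFunctions_sup {σ τ : Perm α} (hd : σ.Disjoint τ) :
    invariantFunctions K σ ⊔ invariantFunctions K τ = ⊤ := by
  refine eq_top_iff.2 fun v _ => Submodule.mem_sup.2
    ⟨fun i => if i ∈ τ.support then v i else 0, ?_, fun i => if i ∈ τ.support then 0 else v i, ?_,
      by ext i; by_cases h : τ i = i <;> simp [h]⟩
  · refine mem_invariantFunctions_of_forall_mem_support fun i hi => ?_
    simp [notMem_support.2 ((hd i).resolve_left (mem_support.1 hi))]
  · exact mem_invariantFunctions_of_forall_mem_support fun i hi => by simp [hi]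

noncomputable def IsCycle.invariantFunctionsEquiv {c : Perm α} (hc : c.IsCycle) {x₀ : α}
    (hx₀ : c x₀ ≠ x₀) : invariantFunctions K c ≃ₗ[K] ({ i // c i = i } → K) × K where
  toFun v := (fun i => v.1 i, v.1 x₀)
  map_add' _ _ := rfl
  map_smul' _ _ := rfl
  invFun p := ⟨fun i => if h : c i = i then p.1 ⟨i, h⟩ else p.2, fun i => by
    by_cases h : c i = i
    · rw [h]
    · simp [h]⟩
  left_inv v := by
    ext i
    by_cases h : c i = i
    · simp [h]
    · obtain ⟨k, rfl⟩ := hc.exists_pow_eq hx₀ h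
      simp [h, apply_pow_eq_of_mem_invariantFunctions v.2]
  right_inv p := by
    ext i
    · simp [i.2]
    · simp [hx₀]

lemma finrank_invariantFunctions (σ : Perm α) :
    finrank K (invariantFunctions K σ) = cycleCount σ := by
  induction σ using cycle_induction_on with
  | base_one =>
    rw [invariantFunctions_one, finrank_top, finrank_fintype_fun_eq_card, cycleCount_one]
  | base_cycles c hc =>
    obtain ⟨x₀, hx₀, -⟩ := id hc
    rw [(hc.invariantFunctionsEquiv hx₀).finrank_eq, hc.cycleCount_eq, finrank_prod, finrank_pi,
      finrank_self, Fintype.card_subtype, ← Finset.card_compl]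
    congr 2
    ext
    simp
  | induction_disjoint σ τ hd _ hσ hτ =>
    have h := Submodule.finrank_sup_add_finrank_inf_eq (invariantFunctions K σ)
      (invariantFunctions K τ)
    rw [hd.invariantFunctions_sup, ← hd.invariantFunctions_mul, finrank_top,
      finrank_fintype_fun_eq_card, hσ, hτ, ← hd.cycleCount_mul_add_card] at h
    omega

end InvariantFunctions

section CycleCountBounds

variable {α : Type*} [Fintype α] [DecidableEq α]

lemma cycleCount_add_cycleCount_le (σ τ : Perm α) :
    cycleCount σ + cycleCount τ ≤ Fintype.card α + cycleCount (σ * τ) := by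
  simp only [← finrank_invariantFunctions (K := ℚ)]
  calc _ = finrank ℚ ↥(invariantFunctions ℚ σ ⊔ invariantFunctions ℚ τ)
        + finrank ℚ ↥(invariantFunctions ℚ σ ⊓ invariantFunctions ℚ τ) :=
        (Submodule.finrank_sup_add_finrank_inf_eq _ _).symm
    _ ≤ Fintype.card α + finrank ℚ (invariantFunctions ℚ (σ * τ)) := by
      gcongr
      · simpa using Submodule.finrank_le (invariantFunctions ℚ σ ⊔ invariantFunctions ℚ τ)
      · exact Submodule.finrank_mono (inf_le_invariantFunctions_mul σ τ)

lemma cycleCount_le_card (σ : Perm α) :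
    cycleCount σ ≤ Fintype.card α := by
  simpa [finrank_invariantFunctions] using Submodule.finrank_le (invariantFunctions ℚ σ)

lemma abs_cycleCount_mul_sub_cycleCount_le (σ τ : Perm α) :
    |(cycleCount (σ * τ) : ℤ) - cycleCount τ| ≤ Fintype.card α - cycleCount σ := by
  have h₁ := cycleCount_add_cycleCount_le σ τ
  have h₂ := cycleCount_add_cycleCount_le σ⁻¹ (σ * τ)
  rw [cycleCount_inv, inv_mul_cancel_left] at h₂
  rw [abs_sub_le_iff]
  constructor <;> omega

end CycleCountBounds

end Equiv.Perm

open Equiv.Perm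

theorem max_cycleCount_diff_general (n : ℕ) (α : Equiv.Perm (Fin n)) :
    IsGreatest {d : ℤ | ∃ γ : Equiv.Perm (Fin n),
        d = |(cycleCount (α * γ) : ℤ) - (cycleCount γ : ℤ)|}
      ((n : ℤ) - cycleCount α) := by
  refine ⟨⟨1, ?_⟩, ?_⟩
  · have h : cycleCount α ≤ n := by simpa using cycleCount_le_card α
    rw [mul_one, cycleCount_one, Fintype.card_fin, abs_sub_comm, abs_of_nonneg (by omega)]
  · rintro d ⟨γ, rfl⟩
    simpa using abs_cycleCount_mul_sub_cycleCount_le α γ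

/-- For any permutation `α` of `[n]`, `n ≥ 1`, the maximum of
`|C(α∘γ) - C(γ)|` over all permutations `γ` equals `n - C(α)`. -/
theorem max_cycleCount_diff (n : ℕ) (hn : 1 ≤ n) (α : Equiv.Perm (Fin n)) :
    IsGreatest {d : ℤ | ∃ γ : Equiv.Perm (Fin n),
        d = |(cycleCount (α * γ) : ℤ) - (cycleCount γ : ℤ)|}
      ((n : ℤ) - cycleCount α) :=
  max_cycleCount_diff_general n α
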